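/- arXiv:1412.3480 — 2 statements merged into one kernel-verified Lean document; each statement's English description precedes it below -/
import Mathlib

section
/- Let M be a linearly ordered cancellative additive commutative monoid, let a, b, u : M and m : ℕ, and assume 0 ≤ a and 0 < b. Suppose that at least one of the following three alternatives holds: (1) a < b, m = 0, and u = a; (2) b ≤ a, a < b + b, m = 1, and b + u = a; (3) b + b ≤ a and there exist n : ℕ and v : M with n • (b + b) + v = a, 0 ≤ v, v < b + b, and aux(b, m, u, n, v), where aux(b, m, u, n, v) means: either (v < b, m = 2 * n, and u = v) or (b ≤ v, m = 2 * n + 1, and b + u = v). Then m • b + u = a, 0 ≤ u, and u < b (i.e., dividing a by b gives quotient m with remainder u). -/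
/-! Since `n • (b + b) = (2 * n) • b`, a remainder `v < b + b` modulo `b + b` is turned into a
remainder modulo `b` by one comparison of `v` with `b`: an element of `[0, b)` has quotient `0`,
one of `[b, b + b)` has quotient `1`, and the multiples of `b` in front add to the quotient. -/

section QuotRem

variable {M : Type*} [AddCommMonoid M] [PartialOrder M]

def IsQuotRem (a b : M) (m : ℕ) (u : M) : Prop :=
  m • b + u = a ∧ 0 ≤ u ∧ u < b

namespace IsQuotRem

variable {a b u v : M} {k : ℕ}

theorem zero_of_lt (ha : 0 ≤ a) (hab : a < b) : IsQuotRem a b 0 a :=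
  ⟨by rw [zero_nsmul, zero_add], ha, hab⟩

theorem one_of_add_eq [IsOrderedCancelAddMonoid M] (hbv : b ≤ v) (hvb : v < b + b)
    (hu : b + u = v) : IsQuotRem v b 1 u := by
  subst hu
  exact ⟨by rw [one_nsmul], le_add_iff_nonneg_right b |>.mp hbv, (add_lt_add_iff_left b).mp hvb⟩

theorem nsmul_add (h : IsQuotRem v b k u) (n : ℕ) : IsQuotRem (n • b + v) b (n + k) u := by
  obtain ⟨hv, hu0, hub⟩ := h
  exact ⟨by rw [add_nsmul, add_assoc, hv], hu0, hub⟩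

end IsQuotRem

end QuotRem

theorem deBruijn_correct_general (M : Type*) [AddCommMonoid M] [LinearOrder M] [IsOrderedCancelAddMonoid M]
    (a b u : M) (m : ℕ) (ha : 0 ≤ a)
    (h : (a < b ∧ m = 0 ∧ u = a) ∨
         (b ≤ a ∧ a < b + b ∧ m = 1 ∧ b + u = a) ∨
         (b + b ≤ a ∧ ∃ (n : ℕ) (v : M),
            n • (b + b) + v = a ∧ 0 ≤ v ∧ v < b + b ∧
            ((v < b ∧ m = 2 * n ∧ u = v) ∨
             (b ≤ v ∧ m = 2 * n + 1 ∧ b + u = v)))) :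
    m • b + u = a ∧ 0 ≤ u ∧ u < b := by
  change IsQuotRem a b m u
  rcases h with ⟨hab, rfl, rfl⟩ | ⟨hba, hab, rfl, hu⟩ | ⟨-, n, v, rfl, hv0, hvbb, haux⟩
  · exact .zero_of_lt ha hab
  · exact .one_of_add_eq hba hab hu
  · have hdouble : n • (b + b) = (2 * n) • b := by rw [nsmul_add, two_mul, add_nsmul]
    rw [hdouble]
    rcases haux with ⟨hvb, rfl, rfl⟩ | ⟨hbv, rfl, hu⟩
    · exact (IsQuotRem.zero_of_lt hv0 hvb).nsmul_add (2 * n)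
    · exact (IsQuotRem.one_of_add_eq hbv hvbb hu).nsmul_add (2 * n)

/-- Correctness theorem (Theorem 1) for de Bruijn's quotient-remainder algorithm:
the recursive body implies the quotient-remainder relation. -/
theorem deBruijn_correct (M : Type*) [AddCommMonoid M] [LinearOrder M] [IsOrderedCancelAddMonoid M]
    (a b u : M) (m : ℕ) (ha : 0 ≤ a) (hb : 0 < b)
    (h : (a < b ∧ m = 0 ∧ u = a) ∨
         (b ≤ a ∧ a < b + b ∧ m = 1 ∧ b + u = a) ∨
         (b + b ≤ a ∧ ∃ (n : ℕ) (v : M),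
            n • (b + b) + v = a ∧ 0 ≤ v ∧ v < b + b ∧
            ((v < b ∧ m = 2 * n ∧ u = v) ∨
             (b ≤ v ∧ m = 2 * n + 1 ∧ b + u = v)))) :
    m • b + u = a ∧ 0 ≤ u ∧ u < b :=
  deBruijn_correct_general M a b u m ha h
end

section
/- Let P be a relational program such that for every q : Q and r : R q the set of atoms S q r is finite. Then the least fixpoint of T_P equals the pointwise union ⨆_{n ∈ ℕ} T_P^n(⊥) of the iterates of T_P starting from the bottom interpretation ⊥ (whose q-component is the empty set): its q-component is the union over n ∈ ℕ of the q-components of T_P^n(⊥). -/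
/-!
Every disjunct has finitely many atoms, so if a body is satisfied by the union of an increasing
chain of interpretations, each of its atoms, and hence the whole body, is already satisfied at
some stage of the chain. Thus `T_P` is ω-Scott-continuous, and Kleene's fixed point theorem
identifies its least fixpoint with the union of the iterates of `T_P` from `⊥`.
-/

abbrev Interp (D Q : Type*) (a : Q → ℕ) : Type _ :=
  (q : Q) → Set (Fin (a q) → D)

/-- An atom over a variable type `V`: a predicate symbol `p` together with the
interpretation-independent evaluation `σ` of its argument terms under an assignment. -/
structure Atom (D Q : Type*) (a : Q → ℕ) (V : Type*) where
  p : Q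
  σ : (V → D) → (Fin (a p) → D)

def Atom.SatisfiedBy {D Q : Type*} {a : Q → ℕ} {V : Type*}
    (A : Atom D Q a V) (I : Interp D Q a) (α : V → D) : Prop :=
  A.σ α ∈ I A.p

/-- A relational program: for each predicate symbol `q`, an index type `R q` of
disjuncts, and for each disjunct a type of existential variables and a set of atoms. -/
structure Program (D Q : Type*) (a : Q → ℕ) where
  R : Q → Type*
  E : (q : Q) → R q → Type*
  S : (q : Q) → (r : R q) → Set (Atom D Q a (Fin (a q) ⊕ E q r))

def Program.BodySat {D Q : Type*} {a : Q → ℕ} (P : Program D Q a)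
    (I : Interp D Q a) (q : Q) (t : Fin (a q) → D) : Prop :=
  ∃ (r : P.R q) (β : P.E q r → D), ∀ A ∈ P.S q r, A.SatisfiedBy I (Sum.elim t β)

def Program.IsModel {D Q : Type*} {a : Q → ℕ} (P : Program D Q a)
    (I : Interp D Q a) : Prop :=
  ∀ q t, P.BodySat I q t → t ∈ I q

def Program.T {D Q : Type*} {a : Q → ℕ} (P : Program D Q a)
    (I : Interp D Q a) : Interp D Q a :=
  fun q => { t | P.BodySat I q t }

open OmegaCompletePartialOrder

theorem Set.mem_ωSup_pi_apply {ι : Type*} {β : ι → Type*} {c : Chain ((i : ι) → Set (β i))}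
    {i : ι} {x : β i} : x ∈ ωSup c i ↔ ∃ n, x ∈ c n i := by
  rw [← ωSup_eq_of_isLUB isLUB_iSup]
  simp

namespace Program

variable {D Q : Type*} {a : Q → ℕ} (P : Program D Q a)

theorem monotone_T : Monotone P.T :=
  fun _ _ hIJ _ _ ⟨r, β, hsat⟩ => ⟨r, β, fun A hA => hIJ A.p (hsat A hA)⟩

theorem exists_bodySat_of_bodySat_ωSup {c : Chain (Interp D Q a)} {q : Q}
    {t : Fin (a q) → D} (hfin : ∀ r, (P.S q r).Finite) (h : P.BodySat (ωSup c) q t) :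
    ∃ n, P.BodySat (c n) q t := by
  obtain ⟨r, β, hsat⟩ := h
  have hev : ∀ A ∈ P.S q r, ∀ᶠ n in Filter.atTop, A.SatisfiedBy (c n) (Sum.elim t β) := by
    intro A hA
    obtain ⟨n, hn⟩ := Set.mem_ωSup_pi_apply.1 (hsat A hA)
    exact Filter.eventually_atTop.2 ⟨n, fun m hm => c.monotone hm A.p hn⟩
  obtain ⟨n, hn⟩ := ((Filter.eventually_all_finite (hfin r)).2 hev).exists
  exact ⟨n, r, β, hn⟩

theorem ωScottContinuous_T (hfin : ∀ q r, (P.S q r).Finite) : ωScottContinuous P.T := by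
  refine ωScottContinuous.of_monotone_map_ωSup ⟨P.monotone_T, fun c => le_antisymm ?_ ?_⟩
  · intro q t ht
    obtain ⟨n, hn⟩ := P.exists_bodySat_of_bodySat_ωSup (hfin q) ht
    exact Set.mem_ωSup_pi_apply.2 ⟨n, hn⟩
  · exact ωSup_le _ _ fun n => P.monotone_T (le_ωSup c n)

end Program

/-- Lemma 3: for a relational program with finite conjunctions, the least
fixpoint of `T_P` equals the pointwise union of the iterates of `T_P`
starting from the bottom interpretation. -/
theorem lfp_eq_iSup_iterates {D Q : Type*} {a : Q → ℕ} (P : Program D Q a)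
    (hfin : ∀ (q : Q) (r : P.R q), (P.S q r).Finite)
    (I₀ : Interp D Q a) (hfix : P.T I₀ = I₀)
    (hleast : ∀ I : Interp D Q a, P.T I = I → ∀ q, I₀ q ⊆ I q) :
    I₀ = fun q => ⋃ n : ℕ, (P.T^[n] (fun _ => ∅)) q := by
  let T : Interp D Q a →o Interp D Q a := ⟨P.T, P.monotone_T⟩
  have hlfp : I₀ = T.lfp := le_antisymm (hleast _ T.map_lfp) (T.lfp_le_fixed hfix)
  rw [hlfp, fixedPoints.lfp_eq_sSup_iterate T (P.ωScottContinuous_T hfin)]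
  funext q
  simp only [iSup_apply, Set.iSup_eq_iUnion]
  rfl
end
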